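/- Let (R,m) be a one-dimensional Cohen–Macaulay local ring and I a regular trace ideal. If I² ⊆ (x) for some nonzerodivisor x ∈ I, then I = (x) : I. -/

import Mathlib

/-!
Since `I² ⊆ (x)`, every element of `I` multiplies `I` into `(x)`. Conversely, an `r` with
`rI ⊆ (x)` defines the homomorphism `I → R, a ↦ ra/x` (division by the nonzerodivisor `x` is
well defined on `(x)`), and it sends `x` to `r`; so `r` lies in the trace of `I`, which is `I`.
-/

open nonZeroDivisors IsLocalRing

/-- The trace ideal of an `R`-module `M`. -/
noncomputable def traceIdeal (R : Type*) [CommRing R] (M : Type*) [AddCommGroup M]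
    [Module R M] : Ideal R :=
  ⨆ f : M →ₗ[R] R, LinearMap.range f

section

variable {R : Type*} [CommRing R]

theorem LinearMap.range_le_traceIdeal {M : Type*} [AddCommGroup M] [Module R M]
    (f : M →ₗ[R] R) : LinearMap.range f ≤ traceIdeal R M :=
  le_iSup (fun g : M →ₗ[R] R ↦ LinearMap.range g) f

namespace Ideal

theorem le_colon_of_mul_le {I J K : Ideal R} (h : I * J ≤ K) : I ≤ K.colon J :=
  fun _ ha ↦ Submodule.mem_colon.mpr fun _ hb ↦ h (mul_mem_mul ha hb)

noncomputable def spanSingletonEquiv {x : R} (hx : x ∈ R⁰) : R ≃ₗ[R] span {x} :=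
  (LinearEquiv.ofInjective (LinearMap.toSpanSingleton R R x)
    fun _ _ h ↦ (mul_cancel_right_mem_nonZeroDivisors hx).mp h).trans
    (LinearEquiv.ofEq _ _ (LinearMap.range_toSpanSingleton x))

/-- The map `a ↦ r a / x` on `I`. -/
noncomputable def divOfMemColon {I : Ideal R} {x r : R} (hx : x ∈ R⁰)
    (hr : r ∈ (span {x}).colon I) : I →ₗ[R] R :=
  (spanSingletonEquiv hx).symm ∘ₗ
    ((r • I.subtype).codRestrict _ fun a ↦ Submodule.mem_colon.mp hr a a.2)

theorem divOfMemColon_self {I : Ideal R} {x r : R} (hx : x ∈ R⁰) (hr : r ∈ (span {x}).colon I)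
    (hxI : x ∈ I) : divOfMemColon hx hr ⟨x, hxI⟩ = r :=
  (LinearEquiv.symm_apply_eq _).mpr (Subtype.ext rfl)

theorem colon_span_singleton_le_traceIdeal {I : Ideal R} {x : R} (hxI : x ∈ I) (hx : x ∈ R⁰) :
    (span {x}).colon I ≤ traceIdeal R I :=
  fun _ hr ↦ (divOfMemColon hx hr).range_le_traceIdeal ⟨⟨x, hxI⟩, divOfMemColon_self hx hr hxI⟩

end Ideal

end

theorem trace_eq_colon (R : Type*) [CommRing R]
    (I : Ideal R)
    (htrace : traceIdeal R I = I)
    (x : R) (hxI : x ∈ I) (hx : x ∈ R⁰)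
    (hsq : I ^ 2 ≤ Ideal.span {x}) :
    I = (Ideal.span {x}).colon I :=
  le_antisymm (Ideal.le_colon_of_mul_le (sq I ▸ hsq))
    ((Ideal.colon_span_singleton_le_traceIdeal hxI hx).trans htrace.le)
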